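/- Let n ≥ 1 and let p₁ < p₂ < ⋯ < pₙ be prime numbers with 5 ≤ p₁. For each j set ξⱼ = i·√(pⱼ(pⱼ − 2)) ∈ ℂ. Then the field extension ℚ(ξ₁, …, ξₙ)/ℚ is Galois and its Galois group is isomorphic to (ℤ/2ℤ)ⁿ. -/

import Mathlib

/-!
Since `ξ_p² = -p(p-2)` is rational, `L = ℚ(ξ₁, …, ξₙ)` is normal (the conjugates of `ξ_j` are
`±ξ_j`) and every automorphism of `L` is an involution. For nonempty `S`, the square of
`∏_{j ∈ S} ξ_j` is `∏_{j ∈ S} -p_j(p_j - 2)`, whose `p`-adic valuation at the largest `p_j` in `S`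
is `1`; so no such product is rational. Adjoining the `ξ_j` one at a time, the elements with
rational square are, by induction, the rational multiples of the products `∏_{j ∈ T} ξ_j`; hence
no new `ξ_j` lies in the field generated by the previous ones, each step doubles the degree, and
`[L : ℚ] = 2ⁿ`. A group of order `2ⁿ` all of whose elements are involutions is `(ℤ/2ℤ)ⁿ`.
-/

/-- The complex number ξ_p = i·√(p(p−2)). -/
noncomputable def xi (p : ℕ) : ℂ :=
  Complex.I * (Real.sqrt ((p : ℝ) * ((p : ℝ) - 2)) : ℝ)

open IntermediateField Polynomial Module

section Quadratic

variable {F K : Type*} [Field F] [Field K] [Algebra F K] {E : IntermediateField F K} {α : K}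

theorem isIntegral_of_sq_mem (hα : α ^ 2 ∈ E) : IsIntegral E α :=
  ⟨X ^ 2 - C ⟨α ^ 2, hα⟩, monic_X_pow_sub_C _ two_ne_zero, by simp⟩

theorem finrank_adjoin_simple_eq_two (hα2 : α ^ 2 ∈ E) (hα : α ∉ E) : finrank E E⟮α⟯ = 2 := by
  have hint := isIntegral_of_sq_mem hα2
  have hroot : aeval α (X ^ 2 - C (⟨α ^ 2, hα2⟩ : E)) = 0 := by simp
  have hle : finrank E E⟮α⟯ ≤ 2 := by
    rw [adjoin.finrank hint, ← natDegree_X_pow_sub_C (n := 2) (r := (⟨α ^ 2, hα2⟩ : E))]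
    exact natDegree_le_of_dvd (minpoly.dvd _ _ hroot) (X_pow_sub_C_ne_zero two_pos _)
  have hne : finrank E E⟮α⟯ ≠ 1 := by
    simpa [IntermediateField.finrank_eq_one_iff, adjoin_simple_eq_bot_iff, mem_bot] using hα
  have : FiniteDimensional E E⟮α⟯ := adjoin.finiteDimensional hint
  have hpos : 0 < finrank E E⟮α⟯ := finrank_pos
  omega

theorem exists_eq_add_mul_of_mem_adjoin_simple (hα : α ^ 2 ∈ E) {x : K} (hx : x ∈ E⟮α⟯) :
    ∃ u ∈ E, ∃ v ∈ E, x = u + v * α := by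
  set g : E[X] := X ^ 2 - C ⟨α ^ 2, hα⟩
  have hroot : aeval α g = 0 := by simp [g]
  rw [← mem_toSubalgebra, adjoin_simple_toSubalgebra_of_isAlgebraic
    (isIntegral_of_sq_mem hα).isAlgebraic, Algebra.adjoin_singleton_eq_range_aeval] at hx
  obtain ⟨f, rfl⟩ := hx
  have hdeg : (f %ₘ g).degree ≤ 1 := by
    have := degree_modByMonic_lt f (monic_X_pow_sub_C _ two_ne_zero : g.Monic)
    rw [degree_X_pow_sub_C two_pos] at this
    exact Order.le_of_lt_succ this
  refine ⟨_, ((f %ₘ g).coeff 0).2, _, ((f %ₘ g).coeff 1).2, ?_⟩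
  change aeval α f = _
  rw [← aeval_modByMonic_eq_self_of_root hroot, eq_X_add_C_of_degree_le_one hdeg]
  simp [add_comm]

theorem exists_eq_or_eq_mul_of_sq_mem (h2 : (2 : K) ≠ 0) (hα2 : α ^ 2 ∈ E) (hα : α ∉ E) {x : K}
    (hx : x ∈ E⟮α⟯) (hx2 : x ^ 2 ∈ E) : ∃ v ∈ E, x = v ∨ x = v * α := by
  obtain ⟨u, hu, v, hv, rfl⟩ := exists_eq_add_mul_of_mem_adjoin_simple hα2 hx
  have hcross : 2 * u * v * α ∈ E := by
    have : 2 * u * v * α = (u + v * α) ^ 2 - u ^ 2 - v ^ 2 * α ^ 2 := by ring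
    rw [this]
    exact sub_mem (sub_mem hx2 (pow_mem hu 2)) (mul_mem (pow_mem hv 2) hα2)
  by_cases hu0 : u = 0
  · exact ⟨v, hv, .inr (by rw [hu0, zero_add])⟩
  by_cases hv0 : v = 0
  · exact ⟨u, hu, .inl (by rw [hv0, zero_mul, add_zero])⟩
  refine absurd ?_ hα
  have h2uv : 2 * u * v ≠ 0 := mul_ne_zero (mul_ne_zero h2 hu0) hv0
  rw [show α = (2 * u * v)⁻¹ * (2 * u * v * α) by field_simp]
  exact mul_mem (inv_mem (mul_mem (mul_mem (ofNat_mem E 2) hu) hv)) hcross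

end Quadratic

section Multiquadratic

variable {F K ι : Type*} [Field F] [Field K] [Algebra F K] {a : ι → K}

theorem adjoin_image_insert [DecidableEq ι] (s : Finset ι) (i : ι) :
    adjoin F (a '' ↑(insert i s)) = (adjoin (adjoin F (a '' s)) {a i}).restrictScalars F := by
  rw [restrictScalars_adjoin, Set.union_singleton, adjoin_insert_adjoin, Finset.coe_insert,
    Set.image_insert_eq]

theorem AlgEquiv.apply_apply_eq_self_of_sq_mem_bot {L : Type*} [Field L] [Algebra F L]
    (σ : L ≃ₐ[F] L) {x : L} (hx : x ^ 2 ∈ (⊥ : IntermediateField F L)) : σ (σ x) = x := by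
  obtain ⟨c, hc⟩ := mem_bot.1 hx
  have hσx : σ x ^ 2 = x ^ 2 := by rw [← map_pow, ← hc, AlgEquiv.commutes]
  rcases sq_eq_sq_iff_eq_or_eq_neg.1 hσx with h | h <;> simp [h]

theorem algEquiv_mul_self_eq_one (hsq : ∀ i, a i ^ 2 ∈ (⊥ : IntermediateField F K))
    (σ : adjoin F (Set.range a) ≃ₐ[F] adjoin F (Set.range a)) : σ * σ = 1 := by
  refine AlgEquiv.coe_toAlgHom_injective (algHom_ext_of_eq_adjoin F rfl ?_)
  rintro _ ⟨i, rfl⟩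
  refine σ.apply_apply_eq_self_of_sq_mem_bot ?_
  obtain ⟨c, hc⟩ := mem_bot.1 (hsq i)
  exact mem_bot.2 ⟨c, Subtype.ext hc⟩

theorem normal_adjoin_range_of_sq_mem (hsq : ∀ i, a i ^ 2 ∈ (⊥ : IntermediateField F K)) :
    Normal F (adjoin F (Set.range a)) := by
  set L := adjoin F (Set.range a)
  have hint : ∀ i, IsIntegral F (a i) := fun i => by
    obtain ⟨c, hc⟩ := mem_bot.1 (hsq i)
    exact IsIntegral.of_pow two_pos (hc ▸ isIntegral_algebraMap)
  have hsplit : ∀ i, ((minpoly F (a i)).map (algebraMap F L)).Splits := fun i => by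
    obtain ⟨c, hc⟩ := mem_bot.1 (hsq i)
    let g : L := ⟨a i, subset_adjoin F _ ⟨i, rfl⟩⟩
    have hg : g ^ 2 = algebraMap F L c := Subtype.ext hc.symm
    have hdvd : minpoly F (a i) ∣ X ^ 2 - C c :=
      minpoly.dvd F _ (by simp [← hc])
    have hfactor : (X ^ 2 - C c).map (algebraMap F L) = (X - C g) * (X - C (-g)) := by
      simp only [Polynomial.map_sub, Polynomial.map_pow, map_X, map_C, ← hg, C_neg, C_pow]
      ring
    refine Splits.of_dvd ?_ ?_ (Polynomial.map_dvd _ hdvd)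
    · rw [hfactor]
      exact (Splits.X_sub_C g).mul (Splits.X_sub_C _)
    · exact Polynomial.map_ne_zero (X_pow_sub_C_ne_zero two_pos c)
  have : Algebra.IsIntegral F L :=
    (isAlgebraic_adjoin (by rintro _ ⟨i, rfl⟩; exact hint i)).isIntegral
  refine normal_iff.2 fun x => ⟨Algebra.IsIntegral.isIntegral x, ?_⟩
  rw [minpoly_eq]
  exact splits_of_mem_adjoin (F := F) (K := K) (by rintro _ ⟨i, rfl⟩; exact ⟨hint i, hsplit i⟩) x.2

/-- The hypothesis `hrep` is the conclusion of `exists_eq_mul_prod_of_sq_mem_bot` for `s`, so that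
this can serve as the induction step of that lemma. -/
theorem apply_notMem_adjoin_image (hsq : ∀ i, a i ^ 2 ∈ (⊥ : IntermediateField F K))
    (hprod : ∀ s : Finset ι, s.Nonempty → ∏ i ∈ s, a i ∉ (⊥ : IntermediateField F K))
    {s : Finset ι} {i : ι} (hi : i ∉ s)
    (hrep : ∀ x ∈ adjoin F (a '' s), x ^ 2 ∈ (⊥ : IntermediateField F K) →
      ∃ t ⊆ s, ∃ c ∈ (⊥ : IntermediateField F K), x = c * ∏ j ∈ t, a j) :
    a i ∉ adjoin F (a '' s) := by
  classical
  intro hmem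
  obtain ⟨t, hts, c, hc, h⟩ := hrep _ hmem (hsq i)
  refine hprod (insert i t) (Finset.insert_nonempty _ _) ?_
  rw [Finset.prod_insert (fun h => hi (hts h)), h, mul_assoc, ← sq, ← Finset.prod_pow]
  exact mul_mem hc (prod_mem fun j _ => hsq j)

theorem exists_eq_mul_prod_of_sq_mem_bot (h2 : (2 : K) ≠ 0)
    (hsq : ∀ i, a i ^ 2 ∈ (⊥ : IntermediateField F K))
    (hprod : ∀ s : Finset ι, s.Nonempty → ∏ i ∈ s, a i ∉ (⊥ : IntermediateField F K))
    (s : Finset ι) {x : K} (hx : x ∈ adjoin F (a '' s))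
    (hx2 : x ^ 2 ∈ (⊥ : IntermediateField F K)) :
    ∃ t ⊆ s, ∃ c ∈ (⊥ : IntermediateField F K), x = c * ∏ j ∈ t, a j := by
  classical
  induction s using Finset.induction_on generalizing x with
  | empty =>
    rw [Finset.coe_empty, Set.image_empty, adjoin_empty] at hx
    exact ⟨∅, subset_rfl, x, hx, by rw [Finset.prod_empty, mul_one]⟩
  | insert i s hi ih =>
    set E := adjoin F (a '' s)
    have hiE : a i ∉ E := apply_notMem_adjoin_image hsq hprod hi fun _ => ih
    rw [adjoin_image_insert, mem_restrictScalars] at hx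
    obtain ⟨v, hv, rfl | rfl⟩ :=
      exists_eq_or_eq_mul_of_sq_mem h2 (bot_le (a := E) (hsq i)) hiE hx (bot_le (a := E) hx2)
    · obtain ⟨t, hts, c, hc, rfl⟩ := ih hv hx2
      exact ⟨t, hts.trans (Finset.subset_insert _ _), c, hc, rfl⟩
    · have hai : a i ≠ 0 := fun h => hiE (h ▸ zero_mem E)
      have hv2 : v ^ 2 ∈ (⊥ : IntermediateField F K) := by
        rw [show v ^ 2 = (v * a i) ^ 2 * (a i ^ 2)⁻¹ by field_simp]
        exact mul_mem hx2 (inv_mem (hsq i))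
      obtain ⟨t, hts, c, hc, rfl⟩ := ih hv hv2
      refine ⟨insert i t, Finset.insert_subset_insert _ hts, c, hc, ?_⟩
      rw [Finset.prod_insert (fun h => hi (hts h))]
      ring

theorem finrank_adjoin_image (h2 : (2 : K) ≠ 0)
    (hsq : ∀ i, a i ^ 2 ∈ (⊥ : IntermediateField F K))
    (hprod : ∀ s : Finset ι, s.Nonempty → ∏ i ∈ s, a i ∉ (⊥ : IntermediateField F K))
    (s : Finset ι) : finrank F (adjoin F (a '' s)) = 2 ^ s.card := by
  classical
  induction s using Finset.induction_on with
  | empty =>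
    rw [Finset.coe_empty, Set.image_empty, adjoin_empty, IntermediateField.finrank_bot,
      Finset.card_empty, pow_zero]
  | insert i s hi ih =>
    set E := adjoin F (a '' s)
    have hiE : a i ∉ E := apply_notMem_adjoin_image hsq hprod hi
      fun _ => exists_eq_mul_prod_of_sq_mem_bot h2 hsq hprod s
    rw [adjoin_image_insert, Finset.card_insert_of_notMem hi, pow_succ, ← ih,
      ← finrank_adjoin_simple_eq_two (bot_le (a := E) (hsq i)) hiE]
    exact (finrank_mul_finrank F E E⟮a i⟯).symm

theorem finrank_adjoin_range [Fintype ι] (h2 : (2 : K) ≠ 0)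
    (hsq : ∀ i, a i ^ 2 ∈ (⊥ : IntermediateField F K))
    (hprod : ∀ s : Finset ι, s.Nonempty → ∏ i ∈ s, a i ∉ (⊥ : IntermediateField F K)) :
    finrank F (adjoin F (Set.range a)) = 2 ^ Fintype.card ι := by
  rw [← Set.image_univ, ← Finset.coe_univ, finrank_adjoin_image h2 hsq hprod, Finset.card_univ]

end Multiquadratic

theorem nonempty_mulEquiv_pi_zmod_two {G : Type*} [Group G] [Finite G] {n : ℕ}
    (hG : ∀ g : G, g * g = 1) (hcard : Nat.card G = 2 ^ n) :
    Nonempty (G ≃* (Fin n → Multiplicative (ZMod 2))) := by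
  let : CommGroup G :=
    { mul_comm := fun a b => (Commute.of_orderOf_dvd_two
        (fun g => orderOf_dvd_of_pow_eq_one (by rw [sq, hG])) a b).eq }
  let : Module (ZMod 2) (Additive G) :=
    AddCommGroup.zmodModule fun x => by rw [two_nsmul]; exact hG x.toMul
  have hrank : finrank (ZMod 2) (Additive G) = n := by
    have h : Nat.card G = 2 ^ finrank (ZMod 2) (Additive G) := by
      have h := Module.natCard_eq_pow_finrank (K := ZMod 2) (V := Additive G)
      rwa [Nat.card_zmod] at h
    exact Nat.pow_right_injective le_rfl (h.symm.trans hcard)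
  let e := (finBasisOfFinrankEq (ZMod 2) (Additive G) hrank).equivFun
  exact ⟨(AddEquiv.toMultiplicativeRight e.toAddEquiv).trans (MulEquiv.piMultiplicative _)⟩

theorem not_isSquare_of_padicValInt_eq_one {P : ℕ} [Fact P.Prime] {z : ℤ}
    (hz : padicValInt P z = 1) : ¬IsSquare (z : ℚ) := by
  rintro ⟨q, hq⟩
  have hz0 : (z : ℚ) ≠ 0 := by rintro h; simp_all
  have hq0 : q ≠ 0 := by rintro rfl; simp_all
  have := padicValRat.of_int (p := P) (z := z)
  rw [hq, padicValRat.mul hq0 hq0, hz] at this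
  omega

theorem padicValInt_prod_neg_mul_sub_two {ι : Type*} {p : ι → ℕ} (hinj : Function.Injective p)
    (h3 : ∀ j, 3 ≤ p j) {s : Finset ι} {m : ι} (hm : m ∈ s) (hmax : ∀ j ∈ s, p j ≤ p m)
    [hP : Fact (p m).Prime] :
    padicValInt (p m) (∏ j ∈ s, -((p j : ℤ) * (p j - 2))) = 1 := by
  classical
  set P := p m
  have hprime : Prime (P : ℤ) := Nat.prime_iff_prime_int.1 hP.out
  have hnd : ∀ z : ℤ, 0 < z → z < P → ¬(P : ℤ) ∣ z := fun z h0 hlt h =>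
    h0.ne' (Int.eq_zero_of_dvd_of_nonneg_of_lt h0.le hlt h)
  have hrest : ¬(P : ℤ) ∣ ∏ j ∈ s.erase m, -((p j : ℤ) * (p j - 2)) := by
    rw [hprime.dvd_finsetProd_iff]
    rintro ⟨j, hj, hdvd⟩
    have hlt : p j < P := lt_of_le_of_ne (hmax j (Finset.mem_of_mem_erase hj))
      fun h => Finset.ne_of_mem_erase hj (hinj h)
    have := h3 j
    rcases hprime.dvd_mul.1 (dvd_neg.1 hdvd) with h | h
    · exact hnd _ (by omega) (by omega) h
    · exact hnd _ (by omega) (by omega) h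
  have hcofactor : ¬(P : ℤ) ∣ -(P - 2) * ∏ j ∈ s.erase m, -((p j : ℤ) * (p j - 2)) := by
    rw [neg_mul, dvd_neg, hprime.dvd_mul, not_or]
    exact ⟨hnd _ (by have := h3 m; omega) (by omega), hrest⟩
  rw [← Finset.insert_erase hm, Finset.prod_insert (Finset.notMem_erase m s)]
  set R := ∏ j ∈ s.erase m, -((p j : ℤ) * (p j - 2))
  rw [show -((P : ℤ) * (P - 2)) * R = (-(P - 2) * R) * P by ring,
    padicValInt_mul_eq_succ _ (by rintro h; exact hcofactor (h ▸ dvd_zero _)),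
    padicValInt.eq_zero_of_not_dvd hcofactor]

theorem xi_sq {p : ℕ} (hp : 2 ≤ p) : xi p ^ 2 = ((-(p * (p - 2)) : ℤ) : ℂ) := by
  have h : (0 : ℝ) ≤ p * (p - 2) := mul_nonneg (by positivity) (by norm_num; exact_mod_cast hp)
  rw [xi, mul_pow, Complex.I_sq, ← Complex.ofReal_pow, Real.sq_sqrt h]
  push_cast
  ring

theorem prod_xi_notMem_bot {ι : Type*} {p : ι → ℕ} (hp : ∀ j, (p j).Prime)
    (hinj : Function.Injective p) (h3 : ∀ j, 3 ≤ p j) {s : Finset ι} (hs : s.Nonempty) :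
    ∏ j ∈ s, xi (p j) ∉ (⊥ : IntermediateField ℚ ℂ) := by
  obtain ⟨m, hm, hmax⟩ := s.exists_max_image p hs
  have := Fact.mk (hp m)
  intro hmem
  obtain ⟨q, hq⟩ := mem_bot.1 hmem
  refine not_isSquare_of_padicValInt_eq_one (padicValInt_prod_neg_mul_sub_two hinj h3 hm hmax)
    ⟨q, ?_⟩
  have : ((q * q : ℚ) : ℂ) = (∏ j ∈ s, xi (p j)) ^ 2 := by
    rw [← hq, eq_ratCast (algebraMap ℚ ℂ) q]; push_cast; ring
  rw [← Finset.prod_pow, Finset.prod_congr rfl fun j _ => xi_sq (by linarith [h3 j])] at this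
  exact_mod_cast this.symm

theorem galois_adjoin_xi_general (n : ℕ) (p : Fin n → ℕ)
    (hp : ∀ j, (p j).Prime) (hmono : StrictMono p) (h5 : ∀ j, 5 ≤ p j) :
    IsGalois ℚ ↥(IntermediateField.adjoin ℚ (Set.range fun j : Fin n => xi (p j))) ∧
    Nonempty
      ((↥(IntermediateField.adjoin ℚ (Set.range fun j : Fin n => xi (p j))) ≃ₐ[ℚ]
        ↥(IntermediateField.adjoin ℚ (Set.range fun j : Fin n => xi (p j)))) ≃*
       (Fin n → Multiplicative (ZMod 2))) := by
  have h3 : ∀ j, 3 ≤ p j := fun j => by linarith [h5 j]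
  have hsq : ∀ j, xi (p j) ^ 2 ∈ (⊥ : IntermediateField ℚ ℂ) := fun j => by
    rw [xi_sq (by linarith [h3 j])]
    exact intCast_mem _ _
  have hfinrank : finrank ℚ (adjoin ℚ (Set.range fun j => xi (p j))) = 2 ^ n := by
    simpa using finrank_adjoin_range two_ne_zero hsq
      fun s hs => prod_xi_notMem_bot hp hmono.injective h3 hs
  have : FiniteDimensional ℚ (adjoin ℚ (Set.range fun j => xi (p j))) :=
    finite_of_finrank_pos (by rw [hfinrank]; positivity)
  have : Normal ℚ (adjoin ℚ (Set.range fun j => xi (p j))) := normal_adjoin_range_of_sq_mem hsq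
  have : IsGalois ℚ (adjoin ℚ (Set.range fun j => xi (p j))) := {}
  refine ⟨this, nonempty_mulEquiv_pi_zmod_two (algEquiv_mul_self_eq_one hsq) ?_⟩
  rw [IsGalois.card_aut_eq_finrank, hfinrank]

/-- For primes 5 ≤ p₁ < ⋯ < pₙ, the extension ℚ(ξ₁,…,ξₙ)/ℚ is Galois with
Galois group isomorphic to (ℤ/2ℤ)ⁿ. -/
theorem galois_adjoin_xi (n : ℕ) (hn : 1 ≤ n) (p : Fin n → ℕ)
    (hp : ∀ j, (p j).Prime) (hmono : StrictMono p) (h5 : ∀ j, 5 ≤ p j) :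
    IsGalois ℚ ↥(IntermediateField.adjoin ℚ (Set.range fun j : Fin n => xi (p j))) ∧
    Nonempty
      ((↥(IntermediateField.adjoin ℚ (Set.range fun j : Fin n => xi (p j))) ≃ₐ[ℚ]
        ↥(IntermediateField.adjoin ℚ (Set.range fun j : Fin n => xi (p j)))) ≃*
       (Fin n → Multiplicative (ZMod 2))) :=
  galois_adjoin_xi_general n p hp hmono h5
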